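/- Let Λ be a row-finite k-graph with no sources. If Λ is not aperiodic, then there exist a vertex v, distinct m, n ∈ ℕ^k, and for every infinite path x ∈ vΛ^∞ the shift identities σ^m(x) = σ^n(x) hold; consequently the infinite-path representation π_S of C*(Λ) on ℓ²(Λ^∞) is not injective (the element s_λ s_λ* − s_μ s_ν* s_λ s_λ*, for λ ∈ vΛ^{m∨n}, μ = λ(0,m), ν = λ(0,n), is a nonzero element of ker π_S). -/

import Mathlib

/-!
Periodicity at `v` says that in every path `λ ∈ vΛ` the segments starting at `m` and at `n`
coincide. Applied to the initial segments `x(0, m ∨ n + q)` of an infinite path `x ∈ vΛ^∞` this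
gives `σ^m x = σ^n x`. Now let `λ ∈ vΛ^{m ∨ n}` and `y = λz ∈ λΛ^∞`. Then `μ = y(0, m)` and
`ν = y(0, n)`, so `S_ν^* ξ_y = ξ_{σ^n y} = ξ_{σ^m y}` and `S_μ ξ_{σ^m y} = ξ_y`; hence
`π_S (s_λ - s_μ s_ν^* s_λ)` kills the standard basis of `ℓ²(Λ^∞)`. On the other hand, the gauge
automorphism `γ_z` fixes `s_λ s_λ^*` and multiplies `s_μ s_ν^* s_λ s_λ^*` by `z^m z̄^n`, which
is `≠ 1` for a suitable `z ∈ 𝕋^k` because `m ≠ n`; as `s_λ s_λ^* ≠ 0`, the two elements differ.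
-/

namespace Paper


/-- A `k`-graph structure on object type `Obj` and morphism type `Hom`:
a countable category with a degree functor to `ℕ^k` satisfying the
unique factorisation property.  `comp μ ν` is the composite "μ then ν",
meaningful when `src μ = rng ν`. -/
structure KGraph (k : ℕ) (Obj Hom : Type) where
  src : Hom → Obj
  rng : Hom → Obj
  comp : Hom → Hom → Hom
  idm : Obj → Hom
  d : Hom → Fin k → ℕ
  countObj : Countable Obj
  countHom : Countable Hom
  src_comp : ∀ μ ν, src μ = rng ν → src (comp μ ν) = src ν
  rng_comp : ∀ μ ν, src μ = rng ν → rng (comp μ ν) = rng μ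
  comp_assoc : ∀ l μ ν, src l = rng μ → src μ = rng ν →
    comp (comp l μ) ν = comp l (comp μ ν)
  src_idm : ∀ v, src (idm v) = v
  rng_idm : ∀ v, rng (idm v) = v
  comp_idm : ∀ μ, comp μ (idm (src μ)) = μ
  idm_comp : ∀ μ, comp (idm (rng μ)) μ = μ
  d_comp : ∀ μ ν, src μ = rng ν → d (comp μ ν) = d μ + d ν
  d_idm : ∀ v, d (idm v) = 0
  factor : ∀ (lam : Hom) (m n : Fin k → ℕ), d lam = m + n →
    ∃! p : Hom × Hom, src p.1 = rng p.2 ∧ comp p.1 p.2 = lam ∧ d p.1 = m ∧ d p.2 = n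

variable {k : ℕ} {Obj Hom : Type}

/-- `IsSegment Λ lam seg p q` says that `seg = lam(p,q)`, i.e. `seg` is the middle
factor of `lam` in a factorisation `lam = a ⬝ seg ⬝ b` with `d a = p`, `d seg = q - p`. -/
def IsSegment (Λ : KGraph k Obj Hom) (lam seg : Hom) (p q : Fin k → ℕ) : Prop :=
  ∃ a b : Hom, Λ.src a = Λ.rng seg ∧ Λ.src seg = Λ.rng b ∧
    Λ.comp a (Λ.comp seg b) = lam ∧ Λ.d a = p ∧ Λ.d seg = q - p

/-- Aperiodicity in the finite-path formulation of Robertson–Sims. -/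
def Aperiodic (Λ : KGraph k Obj Hom) : Prop :=
  ∀ (v : Obj) (m n : Fin k → ℕ), m ≠ n → ∃ lam : Hom,
    Λ.rng lam = v ∧ m ⊔ n ≤ Λ.d lam ∧
    ∀ s1 s2 : Hom, IsSegment Λ lam s1 m (m + (Λ.d lam - (m ⊔ n))) →
      IsSegment Λ lam s2 n (n + (Λ.d lam - (m ⊔ n))) → s1 ≠ s2

def NoSources (Λ : KGraph k Obj Hom) : Prop :=
  ∀ (v : Obj) (i : Fin k), ∃ h : Hom, Λ.rng h = v ∧ Λ.d h = Pi.single i 1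

def RowFinite (Λ : KGraph k Obj Hom) : Prop :=
  ∀ (v : Obj) (i : Fin k), {h : Hom | Λ.rng h = v ∧ Λ.d h = Pi.single i 1}.Finite

def Cofinal (Λ : KGraph k Obj Hom) : Prop :=
  ∀ v w : Obj, ∃ n : Fin k → ℕ, ∀ lam : Hom, Λ.rng lam = w → Λ.d lam = n →
    ∃ μ : Hom, Λ.rng μ = v ∧ Λ.src μ = Λ.src lam

/-- A degree-preserving functor between `k`-graphs. -/
structure KFunctor {O H O' H' : Type} (Λ : KGraph k O H) (Γ : KGraph k O' H') where
  onObj : O → O'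
  onHom : H → H'
  rng_comm : ∀ h, Γ.rng (onHom h) = onObj (Λ.rng h)
  src_comm : ∀ h, Γ.src (onHom h) = onObj (Λ.src h)
  idm_comm : ∀ v, onHom (Λ.idm v) = Γ.idm (onObj v)
  comp_comm : ∀ μ ν, Λ.src μ = Λ.rng ν → onHom (Λ.comp μ ν) = Γ.comp (onHom μ) (onHom ν)
  d_comm : ∀ h, Γ.d (onHom h) = Λ.d h

/-- An infinite path in a `k`-graph: a `k`-graph morphism from `Ω_k`. -/
structure InfPath (Λ : KGraph k Obj Hom) where
  vert : (Fin k → ℕ) → Obj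
  seg : ∀ p q : Fin k → ℕ, p ≤ q → Hom
  rng_seg : ∀ p q h, Λ.rng (seg p q h) = vert p
  src_seg : ∀ p q h, Λ.src (seg p q h) = vert q
  d_seg : ∀ p q h, Λ.d (seg p q h) = q - p
  comp_seg : ∀ p q r (h1 : p ≤ q) (h2 : q ≤ r),
    Λ.comp (seg p q h1) (seg q r h2) = seg p r (h1.trans h2)

/-- The shift `σ^p` on infinite paths. -/
def InfPath.shift (Λ : KGraph k Obj Hom) (p : Fin k → ℕ) (x : InfPath Λ) : InfPath Λ where
  vert q := x.vert (p + q)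
  seg q r h := x.seg (p + q) (p + r) (add_le_add le_rfl h)
  rng_seg q r h := x.rng_seg _ _ _
  src_seg q r h := x.src_seg _ _ _
  d_seg q r h := by
    rw [x.d_seg]
    funext i
    simp [Nat.add_sub_add_left]
  comp_seg q r t h1 h2 := x.comp_seg _ _ _ _ _


/-- A Cuntz–Krieger `Λ`-family in a ring `B` with involution: a family of
partial isometries indexed by the paths of `Λ` satisfying (CK1)–(CK4).
The sum relation (CK4) is stated for any finite enumeration of `vΛ^m`. -/
structure IsCKFamily {Obj Hom : Type} (Λ : KGraph k Obj Hom)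
    {B : Type} [Ring B] [StarRing B] (t : Hom → B) : Prop where
  partial_isometry : ∀ lam : Hom, t lam * star (t lam) * t lam = t lam
  idem : ∀ v : Obj, t (Λ.idm v) * t (Λ.idm v) = t (Λ.idm v)
  selfadj : ∀ v : Obj, star (t (Λ.idm v)) = t (Λ.idm v)
  orth : ∀ v w : Obj, v ≠ w → t (Λ.idm v) * t (Λ.idm w) = 0
  mul_eq : ∀ μ ν : Hom, Λ.src μ = Λ.rng ν → t (Λ.comp μ ν) = t μ * t ν
  star_mul_self : ∀ lam : Hom, star (t lam) * t lam = t (Λ.idm (Λ.src lam))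
  sum_rel : ∀ (v : Obj) (m : Fin k → ℕ) (S : Finset Hom),
    (∀ h : Hom, h ∈ S ↔ (Λ.rng h = v ∧ Λ.d h = m)) →
    t (Λ.idm v) = ∑ h ∈ S, t h * star (t h)

/-- `ExtendsTo Λ lam x y` says that `y = λ·x` is the extension of the infinite
path `x` by the finite path `lam` (requires `s(λ) = r(x)`). -/
def ExtendsTo {Obj Hom : Type} (Λ : KGraph k Obj Hom) (lam : Hom)
    (x y : InfPath Λ) : Prop :=
  y.vert 0 = Λ.rng lam ∧
  ∀ q : Fin k → ℕ,
    y.seg 0 (Λ.d lam + q) zero_le = Λ.comp lam (x.seg 0 q zero_le)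

namespace KGraph

variable (Λ : KGraph k Obj Hom)

def IsPrefix (a L : Hom) : Prop :=
  ∃ b, Λ.src a = Λ.rng b ∧ Λ.comp a b = L

theorem comp_inj_of_d_eq {a b a' b' : Hom} (h : Λ.src a = Λ.rng b) (h' : Λ.src a' = Λ.rng b')
    (heq : Λ.comp a b = Λ.comp a' b') (hd : Λ.d a = Λ.d a') : a = a' ∧ b = b' := by
  have hdb : Λ.d b = Λ.d b' := by
    have := congrArg Λ.d heq
    rw [Λ.d_comp _ _ h, Λ.d_comp _ _ h', hd] at this
    exact add_left_cancel this
  obtain ⟨p, -, hp⟩ := Λ.factor (Λ.comp a b) (Λ.d a) (Λ.d b) (Λ.d_comp _ _ h)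
  exact Prod.ext_iff.mp <|
    (hp (a, b) ⟨h, rfl, rfl, rfl⟩).trans (hp (a', b') ⟨h', heq.symm, hd.symm, hdb.symm⟩).symm

theorem comp_left_cancel {a b b' : Hom} (h : Λ.src a = Λ.rng b) (h' : Λ.src a = Λ.rng b')
    (heq : Λ.comp a b = Λ.comp a b') : b = b' :=
  (Λ.comp_inj_of_d_eq h h' heq rfl).2

theorem eq_idm_of_d_eq_zero {a : Hom} (ha : Λ.d a = 0) : a = Λ.idm (Λ.rng a) :=
  (Λ.comp_inj_of_d_eq (Λ.rng_idm _).symm (Λ.src_idm _)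
    ((Λ.comp_idm a).trans (Λ.idm_comp a).symm) (by rw [ha, Λ.d_idm])).1

theorem exists_isPrefix_of_le {L : Hom} {q : Fin k → ℕ} (hq : q ≤ Λ.d L) :
    ∃ a, Λ.IsPrefix a L ∧ Λ.d a = q := by
  obtain ⟨⟨a, b⟩, ⟨h, hab, ha, -⟩, -⟩ :=
    Λ.factor L q (Λ.d L - q) (add_tsub_cancel_of_le hq).symm
  exact ⟨a, ⟨b, h, hab⟩, ha⟩

variable {Λ}

theorem IsPrefix.trans {a b c : Hom} (hab : Λ.IsPrefix a b) (hbc : Λ.IsPrefix b c) :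
    Λ.IsPrefix a c := by
  obtain ⟨e, he, rfl⟩ := hab
  obtain ⟨e', he', rfl⟩ := hbc
  rw [Λ.src_comp _ _ he] at he'
  exact ⟨Λ.comp e e', by rw [he, Λ.rng_comp _ _ he'], (Λ.comp_assoc _ _ _ he he').symm⟩

theorem IsPrefix.eq_of_d_eq {a a' L : Hom} (h : Λ.IsPrefix a L) (h' : Λ.IsPrefix a' L)
    (hd : Λ.d a = Λ.d a') : a = a' := by
  obtain ⟨b, hb, hab⟩ := h
  obtain ⟨b', hb', hab'⟩ := h'
  exact (Λ.comp_inj_of_d_eq hb hb' (hab.trans hab'.symm) hd).1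

theorem IsPrefix.of_d_le {a a' L : Hom} (h : Λ.IsPrefix a L) (h' : Λ.IsPrefix a' L)
    (hd : Λ.d a ≤ Λ.d a') : Λ.IsPrefix a a' := by
  obtain ⟨c, ⟨e, hce, rfl⟩, hc⟩ := Λ.exists_isPrefix_of_le hd
  obtain rfl : c = a := (IsPrefix.trans ⟨e, hce, rfl⟩ h').eq_of_d_eq h hc
  exact ⟨e, hce, rfl⟩

end KGraph

variable {Λ : KGraph k Obj Hom}

theorem IsSegment.d_eq {L e : Hom} {p q : Fin k → ℕ} (h : IsSegment Λ L e p q) :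
    Λ.d e = q - p := by
  obtain ⟨-, -, -, -, -, -, hd⟩ := h
  exact hd

theorem IsSegment.unique {L e e' : Hom} {p q : Fin k → ℕ} (he : IsSegment Λ L e p q)
    (he' : IsSegment Λ L e' p q) : e = e' := by
  obtain ⟨a, b, ha, hb, hL, hda, hde⟩ := he
  obtain ⟨a', b', ha', hb', hL', hda', hde'⟩ := he'
  obtain ⟨-, heb⟩ := Λ.comp_inj_of_d_eq (by rw [ha, Λ.rng_comp _ _ hb])
    (by rw [ha', Λ.rng_comp _ _ hb']) (hL.trans hL'.symm) (hda.trans hda'.symm)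
  exact (Λ.comp_inj_of_d_eq hb hb' heb (hde.trans hde'.symm)).1

namespace InfPath

theorem seg_congr (x : InfPath Λ) {p q p' q' : Fin k → ℕ} (hp : p = p') (hq : q = q')
    (h : p ≤ q) (h' : p' ≤ q') : x.seg p q h = x.seg p' q' h' := by
  subst hp hq
  rfl

theorem seg_self (x : InfPath Λ) (p : Fin k → ℕ) : x.seg p p le_rfl = Λ.idm (x.vert p) := by
  rw [Λ.eq_idm_of_d_eq_zero (a := x.seg p p le_rfl) (by rw [x.d_seg, tsub_self]), x.rng_seg]

theorem ext_of_seg_zero {x y : InfPath Λ}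
    (h : ∀ q, x.seg 0 q zero_le = y.seg 0 q zero_le) : x = y := by
  have hvert : x.vert = y.vert :=
    funext fun q => by rw [← x.src_seg 0 q zero_le, h, y.src_seg]
  have hseg : ∀ p q (hpq : p ≤ q), x.seg p q hpq = y.seg p q hpq := fun p q hpq =>
    Λ.comp_left_cancel (a := x.seg 0 p zero_le) (by rw [x.src_seg, x.rng_seg])
      (by rw [h, y.src_seg, y.rng_seg]) (by rw [x.comp_seg, h q, h p, y.comp_seg])
  cases x
  cases y
  obtain rfl : _ = _ := hvert
  obtain rfl : _ = _ := funext fun p => funext fun q => funext (hseg p q)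
  rfl

theorem isSegment_seg (x : InfPath Λ) {p q r : Fin k → ℕ} (hpq : p ≤ q) (hqr : q ≤ r) :
    IsSegment Λ (x.seg 0 r zero_le) (x.seg p q hpq) p q :=
  ⟨x.seg 0 p zero_le, x.seg q r hqr, by rw [x.src_seg, x.rng_seg], by rw [x.src_seg, x.rng_seg],
    by rw [x.comp_seg, x.comp_seg], by rw [x.d_seg, tsub_zero], x.d_seg _ _ _⟩

theorem shift_seg_zero (x : InfPath Λ) (m q : Fin k → ℕ) :
    (InfPath.shift Λ m x).seg 0 q zero_le = x.seg m (m + q) le_self_add :=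
  x.seg_congr (add_zero m) rfl _ _

theorem shift_vert_zero (x : InfPath Λ) (m : Fin k → ℕ) :
    (InfPath.shift Λ m x).vert 0 = Λ.src (x.seg 0 m zero_le) := by
  rw [x.src_seg]
  exact congrArg x.vert (add_zero m)

noncomputable def ofPrefixes (f : (Fin k → ℕ) → Hom) (hf : ∀ q, Λ.d (f q) = q)
    (hpre : ∀ p q, p ≤ q → Λ.IsPrefix (f p) (f q)) : InfPath Λ where
  vert p := Λ.src (f p)
  seg p q h := (hpre p q h).choose
  rng_seg p q h := (hpre p q h).choose_spec.1.symm
  src_seg p q h := by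
    obtain ⟨hs, hc⟩ := (hpre p q h).choose_spec
    generalize (hpre p q h).choose = e at hs hc ⊢
    rw [← hc, Λ.src_comp _ _ hs]
  d_seg p q h := by
    obtain ⟨hs, hc⟩ := (hpre p q h).choose_spec
    generalize (hpre p q h).choose = e at hs hc ⊢
    have hd := congrArg Λ.d hc
    rw [Λ.d_comp _ _ hs, hf, hf] at hd
    rw [← hd, add_tsub_cancel_left]
  comp_seg p q r h1 h2 := by
    obtain ⟨hs1, hc1⟩ := (hpre p q h1).choose_spec
    obtain ⟨hs2, hc2⟩ := (hpre q r h2).choose_spec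
    obtain ⟨hs3, hc3⟩ := (hpre p r (h1.trans h2)).choose_spec
    generalize (hpre p q h1).choose = e1 at hs1 hc1 ⊢
    generalize (hpre q r h2).choose = e2 at hs2 hc2 ⊢
    generalize (hpre p r (h1.trans h2)).choose = e3 at hs3 hc3 ⊢
    have h12 : Λ.src e1 = Λ.rng e2 := by rw [← hs2, ← hc1, Λ.src_comp _ _ hs1]
    refine Λ.comp_left_cancel (by rw [hs1, Λ.rng_comp _ _ h12]) hs3 ?_
    rw [← Λ.comp_assoc _ _ _ hs1 h12, hc1, hc2, hc3]

theorem ofPrefixes_seg_zero (f : (Fin k → ℕ) → Hom) (hf : ∀ q, Λ.d (f q) = q)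
    (hpre : ∀ p q, p ≤ q → Λ.IsPrefix (f p) (f q)) (q : Fin k → ℕ) :
    (ofPrefixes f hf hpre).seg 0 q zero_le = f q := by
  obtain ⟨hs, hc⟩ := (hpre 0 q zero_le).choose_spec
  show (hpre 0 q zero_le).choose = f q
  generalize (hpre 0 q zero_le).choose = e at hs hc ⊢
  have hf0 : f 0 = Λ.idm (Λ.rng e) := by
    rw [← hs, Λ.eq_idm_of_d_eq_zero (hf 0), Λ.src_idm]
  rw [← hc, hf0, Λ.idm_comp]

theorem exists_extendsTo {lam : Hom} {z : InfPath Λ} (hz : z.vert 0 = Λ.src lam) :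
    ∃ y, ExtendsTo Λ lam z y := by
  have hsrc : ∀ q, Λ.src lam = Λ.rng (z.seg 0 q zero_le) := fun q => by rw [z.rng_seg, hz]
  have hd : ∀ q, Λ.d (Λ.comp lam (z.seg 0 q zero_le)) = Λ.d lam + q := fun q => by
    rw [Λ.d_comp _ _ (hsrc q), z.d_seg, tsub_zero]
  have hpre : ∀ p q (hpq : p ≤ q),
      Λ.IsPrefix (Λ.comp lam (z.seg 0 p zero_le)) (Λ.comp lam (z.seg 0 q zero_le)) :=
    fun p q hpq => ⟨z.seg p q hpq, by rw [Λ.src_comp _ _ (hsrc p), z.src_seg, z.rng_seg], by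
      rw [Λ.comp_assoc _ _ _ (hsrc p) (by rw [z.src_seg, z.rng_seg]), z.comp_seg]⟩
  -- `f q` is the initial segment `(λz)(0, q)` of the path to be built
  choose f hf hdf using fun q => Λ.exists_isPrefix_of_le (le_add_self.trans (hd q).ge)
  let y := ofPrefixes f hdf fun p q hpq =>
    ((hf p).trans (hpre p q hpq)).of_d_le (hf q) (by rwa [hdf, hdf])
  have hy : ∀ q, y.seg 0 (Λ.d lam + q) zero_le = Λ.comp lam (z.seg 0 q zero_le) := fun q => by
    rw [ofPrefixes_seg_zero]
    exact (hf _).eq_of_d_eq (hpre q _ le_add_self) (by rw [hdf, hd])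
  exact ⟨y, by rw [← y.rng_seg 0 (Λ.d lam + 0) zero_le, hy, Λ.rng_comp _ _ (hsrc 0)], hy⟩

theorem extendsTo_shift (y : InfPath Λ) (m : Fin k → ℕ) :
    ExtendsTo Λ (y.seg 0 m zero_le) (InfPath.shift Λ m y) y := by
  refine ⟨(y.rng_seg _ _ _).symm, fun q => ?_⟩
  rw [shift_seg_zero, y.comp_seg]
  exact y.seg_congr rfl (by rw [y.d_seg, tsub_zero]) _ _

theorem extendsTo_idm (x : InfPath Λ) : ExtendsTo Λ (Λ.idm (x.vert 0)) x x := by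
  refine ⟨(Λ.rng_idm _).symm, fun q => ?_⟩
  refine (x.seg_congr rfl (by rw [Λ.d_idm, zero_add]) _ zero_le).trans ?_
  rw [← x.rng_seg 0 q zero_le, Λ.idm_comp]

theorem shift_eq_shift_of_periodic {v : Obj} {m n : Fin k → ℕ}
    (hper : ∀ lam : Hom, Λ.rng lam = v → m ⊔ n ≤ Λ.d lam →
      ∀ s1 s2 : Hom, IsSegment Λ lam s1 m (m + (Λ.d lam - (m ⊔ n))) →
        IsSegment Λ lam s2 n (n + (Λ.d lam - (m ⊔ n))) → s1 = s2)
    {x : InfPath Λ} (hx : x.vert 0 = v) : InfPath.shift Λ m x = InfPath.shift Λ n x := by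
  refine ext_of_seg_zero fun q => ?_
  have hd : Λ.d (x.seg 0 (m ⊔ n + q) zero_le) = m ⊔ n + q := by rw [x.d_seg, tsub_zero]
  have hq : Λ.d (x.seg 0 (m ⊔ n + q) zero_le) - m ⊔ n = q := by rw [hd, add_tsub_cancel_left]
  rw [shift_seg_zero, shift_seg_zero]
  refine hper _ (by rw [x.rng_seg, hx]) (hd ▸ le_self_add) _ _ ?_ ?_ <;> rw [hq]
  · exact x.isSegment_seg le_self_add (by gcongr; exact le_sup_left)
  · exact x.isSegment_seg le_self_add (by gcongr; exact le_sup_right)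

end InfPath

theorem IsSegment.eq_seg_zero {x : InfPath Λ} {L e : Hom} {q r : Fin k → ℕ}
    (hqr : q ≤ r) (hL : x.seg 0 r zero_le = L) (he : IsSegment Λ L e 0 q) :
    e = x.seg 0 q zero_le :=
  he.unique (hL ▸ x.isSegment_seg zero_le hqr)

theorem lp.ext_single_one {ι 𝕜 F : Type*} [DecidableEq ι] [NormedField 𝕜] {p : ENNReal}
    [Fact (1 ≤ p)] (hp : p ≠ ⊤) [AddCommMonoid F] [Module 𝕜 F] [TopologicalSpace F] [T2Space F]
    {f g : lp (fun _ : ι => 𝕜) p →L[𝕜] F} (h : ∀ i, f (lp.single p i 1) = g (lp.single p i 1)) :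
    f = g :=
  lp.ext_continuousLinearMap hp fun i => ContinuousLinearMap.ext_ring (h i)

section Representation

variable [DecidableEq (InfPath Λ)] {B : Type} [Ring B] [StarRing B] [Algebra ℂ B]
  {s : Hom → B} {π : B →⋆ₐ[ℂ] (lp (fun _ : InfPath Λ => ℂ) 2 →L[ℂ] lp (fun _ : InfPath Λ => ℂ) 2)}

theorem rep_star_single_of_extendsTo (hCK : IsCKFamily Λ s)
    (hπ1 : ∀ (lam : Hom) (x y : InfPath Λ), x.vert 0 = Λ.src lam → ExtendsTo Λ lam x y →
      π (s lam) (lp.single 2 x (1 : ℂ)) = lp.single 2 y (1 : ℂ))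
    {lam : Hom} {x y : InfPath Λ} (hx : x.vert 0 = Λ.src lam) (hxy : ExtendsTo Λ lam x y) :
    π (star (s lam)) (lp.single 2 y (1 : ℂ)) = lp.single 2 x (1 : ℂ) := by
  rw [← hπ1 lam x y hx hxy, ← mul_apply_eq_comp, ← map_mul, hCK.star_mul_self, ← hx]
  exact hπ1 _ x x (Λ.src_idm _).symm x.extendsTo_idm

theorem rep_apply_single_eq_zero_of_periodic (hCK : IsCKFamily Λ s)
    (hπ1 : ∀ (lam : Hom) (x y : InfPath Λ), x.vert 0 = Λ.src lam → ExtendsTo Λ lam x y →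
      π (s lam) (lp.single 2 x (1 : ℂ)) = lp.single 2 y (1 : ℂ))
    (hπ0 : ∀ (lam : Hom) (x : InfPath Λ), x.vert 0 ≠ Λ.src lam →
      π (s lam) (lp.single 2 x (1 : ℂ)) = 0)
    {v : Obj} {m n : Fin k → ℕ}
    (hshift : ∀ x : InfPath Λ, x.vert 0 = v → InfPath.shift Λ m x = InfPath.shift Λ n x)
    {lam μ ν : Hom} (hr : Λ.rng lam = v) (hd : Λ.d lam = m ⊔ n)
    (hμ : IsSegment Λ lam μ 0 m) (hν : IsSegment Λ lam ν 0 n) (z : InfPath Λ) :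
    π (s lam - s μ * star (s ν) * s lam) (lp.single 2 z (1 : ℂ)) = 0 := by
  rw [map_sub, map_mul, map_mul, sub_apply, mul_apply_eq_comp, mul_apply_eq_comp]
  by_cases hz : z.vert 0 = Λ.src lam
  swap
  · rw [hπ0 _ _ hz, map_zero, map_zero, sub_self]
  obtain ⟨y, hy⟩ := InfPath.exists_extendsTo hz
  have hylam : y.seg 0 (m ⊔ n) zero_le = lam := by
    rw [y.seg_congr rfl (show m ⊔ n = Λ.d lam + 0 by rw [hd, add_zero]) _ zero_le, hy.2,
      z.seg_self, hz, Λ.comp_idm]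
  obtain rfl := hμ.eq_seg_zero le_sup_left hylam
  obtain rfl := hν.eq_seg_zero le_sup_right hylam
  rw [hπ1 _ _ _ hz hy, rep_star_single_of_extendsTo hCK hπ1 (y.shift_vert_zero n)
    (y.extendsTo_shift n), ← hshift y (by rw [hy.1, hr]),
    hπ1 _ _ _ (y.shift_vert_zero m) (y.extendsTo_shift m), sub_self]

end Representation

theorem exists_norm_eq_one_pow_mul_star_pow_ne_one {a b : ℕ} (hab : a ≠ b) :
    ∃ ω : ℂ, ‖ω‖ = 1 ∧ ω ^ a * star ω ^ b ≠ 1 := by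
  have hne : (a : ℝ) - b ≠ 0 := sub_ne_zero.mpr (by exact_mod_cast hab)
  set θ : ℝ := Real.pi / (a - b)
  refine ⟨Complex.exp (θ * Complex.I), Complex.norm_exp_ofReal_mul_I θ, ?_⟩
  have hstar : star (Complex.exp (θ * Complex.I)) = Complex.exp ((-θ : ℝ) * Complex.I) := by
    rw [show star (Complex.exp (θ * Complex.I)) = (starRingEnd ℂ) (Complex.exp (θ * Complex.I))
      from rfl, ← Complex.exp_conj, map_mul, Complex.conj_ofReal, Complex.conj_I]
    push_cast
    ring_nf
  have hexp : Complex.exp (θ * Complex.I) ^ a * star (Complex.exp (θ * Complex.I)) ^ b =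
      Complex.exp (Real.pi * Complex.I) := by
    rw [hstar, ← Complex.exp_nat_mul, ← Complex.exp_nat_mul, ← Complex.exp_add]
    congr 1
    have : ((a : ℝ) - b) * θ = Real.pi := mul_div_cancel₀ _ hne
    have hc : (((a : ℝ) - b) * θ : ℝ) = ((Real.pi : ℝ) : ℂ) := by rw [this]
    push_cast at hc ⊢
    linear_combination Complex.I * hc
  rw [hexp, Complex.exp_pi_mul_I]
  norm_num

theorem map_mul_star_of_map_eq_smul {A : Type*} [Ring A] [StarRing A] [Algebra ℂ A]
    [StarModule ℂ A] (γ : A →⋆ₐ[ℂ] A) {x y : A} {a b : ℂ} (hx : γ x = a • x)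
    (hy : γ y = b • y) : γ (x * star y) = (a * star b) • (x * star y) := by
  rw [map_mul, map_star, hx, hy, star_smul, smul_mul_smul_comm]

theorem IsCKFamily.mul_star_ne_zero {B : Type} [Ring B] [StarRing B] {s : Hom → B}
    (hCK : IsCKFamily Λ s) (hnz : ∀ w : Obj, s (Λ.idm w) ≠ 0) (lam : Hom) :
    s lam * star (s lam) ≠ 0 := by
  intro h
  have hs : s lam = 0 := by rw [← hCK.partial_isometry, h, zero_mul]
  exact hnz _ (by rw [← hCK.star_mul_self, hs, mul_zero])

theorem IsCKFamily.mul_star_sub_ne_zero_of_d_ne {B : Type} [Ring B] [StarRing B]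
    [Algebra ℂ B] [StarModule ℂ B] {s : Hom → B} (hCK : IsCKFamily Λ s)
    (hnz : ∀ w : Obj, s (Λ.idm w) ≠ 0)
    (hgauge : ∀ z : Fin k → ℂ, (∀ i, ‖z i‖ = 1) →
      ∃ γ : B →⋆ₐ[ℂ] B, ∀ h : Hom, γ (s h) = (∏ i, z i ^ Λ.d h i) • s h)
    (lam : Hom) {μ ν : Hom} (hμν : Λ.d μ ≠ Λ.d ν) :
    s lam * star (s lam) - s μ * star (s ν) * (s lam * star (s lam)) ≠ 0 := by
  obtain ⟨i, hi⟩ := Function.ne_iff.mp hμν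
  obtain ⟨ω, hω, hne⟩ := exists_norm_eq_one_pow_mul_star_pow_ne_one hi
  obtain ⟨γ, hγ⟩ := hgauge (Pi.mulSingle i ω) fun j => by
    rcases eq_or_ne j i with rfl | hj
    · rwa [Pi.mulSingle_eq_same]
    · rw [Pi.mulSingle_eq_of_ne hj, norm_one]
  have hγs : ∀ h, γ (s h) = ω ^ Λ.d h i • s h := fun h => by
    rw [hγ, Fintype.prod_eq_single i fun j hj => by rw [Pi.mulSingle_eq_of_ne hj, one_pow],
      Pi.mulSingle_eq_same]
  set P := s lam * star (s lam) with hPdef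
  have hP : γ P = P := by
    rw [hPdef, map_mul_star_of_map_eq_smul γ (hγs lam) (hγs lam), star_pow, ← mul_pow,
      show star ω = (starRingEnd ℂ) ω from rfl, RCLike.mul_conj, hω, RCLike.ofReal_one, one_pow,
      one_pow, one_smul]
  have hQ : γ (s μ * star (s ν) * P) =
      (ω ^ Λ.d μ i * star ω ^ Λ.d ν i) • (s μ * star (s ν) * P) := by
    rw [map_mul, hP, map_mul_star_of_map_eq_smul γ (hγs μ) (hγs ν), star_pow, smul_mul_assoc]
  rw [sub_ne_zero]
  intro hPQ
  -- `P` would be a `γ`-eigenvector both for `1` and for `ω^(d μ i) ω̄^(d ν i) ≠ 1`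
  have h0 : (1 - ω ^ Λ.d μ i * star ω ^ Λ.d ν i) • P = 0 := by
    rw [sub_smul, one_smul, sub_eq_zero]
    conv_lhs => rw [← hP, hPQ, hQ, ← hPQ]
  exact hCK.mul_star_ne_zero hnz lam
    ((smul_eq_zero.mp h0).resolve_left (sub_ne_zero.mpr hne.symm))

theorem not_aperiodic_infinite_path_rep_not_injective_general
    {k : ℕ} {Obj Hom : Type} (Λ : KGraph k Obj Hom)
    (v : Obj) (m n : Fin k → ℕ) (hmn : m ≠ n)
    (hper : ∀ lam : Hom, Λ.rng lam = v → m ⊔ n ≤ Λ.d lam →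
      ∀ s1 s2 : Hom, IsSegment Λ lam s1 m (m + (Λ.d lam - (m ⊔ n))) →
        IsSegment Λ lam s2 n (n + (Λ.d lam - (m ⊔ n))) → s1 = s2)
    [DecidableEq (InfPath Λ)]
    {B : Type} [NormedRing B] [StarRing B] [NormedAlgebra ℂ B]
    [StarModule ℂ B]
    (s : Hom → B) (hCK : IsCKFamily Λ s) (hnz : ∀ w : Obj, s (Λ.idm w) ≠ 0)
    (hgauge : ∀ z : Fin k → ℂ, (∀ i, ‖z i‖ = 1) →
      ∃ γ : B →⋆ₐ[ℂ] B, ∀ h : Hom, γ (s h) = (∏ i, z i ^ Λ.d h i) • s h)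
    (π : B →⋆ₐ[ℂ] ((lp (fun _ : InfPath Λ => ℂ) 2) →L[ℂ] (lp (fun _ : InfPath Λ => ℂ) 2)))
    (hπ1 : ∀ (lam : Hom) (x y : InfPath Λ), x.vert 0 = Λ.src lam →
      ExtendsTo Λ lam x y →
      π (s lam) (lp.single 2 x (1 : ℂ)) = lp.single 2 y (1 : ℂ))
    (hπ0 : ∀ (lam : Hom) (x : InfPath Λ), x.vert 0 ≠ Λ.src lam →
      π (s lam) (lp.single 2 x (1 : ℂ)) = 0)
    (lam μ ν : Hom) (hr : Λ.rng lam = v) (hd : Λ.d lam = m ⊔ n)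
    (hμ : IsSegment Λ lam μ 0 m) (hν : IsSegment Λ lam ν 0 n) :
    (∀ x : InfPath Λ, x.vert 0 = v → InfPath.shift Λ m x = InfPath.shift Λ n x) ∧
    s lam * star (s lam) - s μ * star (s ν) * (s lam * star (s lam)) ≠ 0 ∧
    π (s lam * star (s lam) - s μ * star (s ν) * (s lam * star (s lam))) = 0 ∧
    ¬ Function.Injective π := by
  have hshift : ∀ x : InfPath Λ, x.vert 0 = v → InfPath.shift Λ m x = InfPath.shift Λ n x :=
    fun x hx => InfPath.shift_eq_shift_of_periodic hper hx
  have hne := hCK.mul_star_sub_ne_zero_of_d_ne hnz hgauge lam (μ := μ) (ν := ν)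
    (by rwa [hμ.d_eq, hν.d_eq, tsub_zero, tsub_zero])
  have hker : π (s lam - s μ * star (s ν) * s lam) = 0 := lp.ext_single_one (by norm_num)
    fun z => by rw [rep_apply_single_eq_zero_of_periodic hCK hπ1 hπ0 hshift hr hd hμ hν z,
      zero_apply]
  have hπe : π (s lam * star (s lam) - s μ * star (s ν) * (s lam * star (s lam))) = 0 := by
    rw [← mul_assoc, ← sub_mul, map_mul, hker, zero_mul]
  exact ⟨hshift, hne, hπe, fun hinj => hne (hinj (hπe.trans (map_zero π).symm))⟩

/-- If `Λ` is a row-finite `k`-graph with no sources which is not aperiodic —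
witnessed at `v` by distinct `m, n` — then every infinite path based at `v`
satisfies `σ^m x = σ^n x`, and consequently the infinite-path representation
`π_S` of `C*(Λ)` on `ℓ²(Λ^∞)` is not injective: for `λ ∈ vΛ^{m∨n}`,
`μ = λ(0,m)`, `ν = λ(0,n)`, the element
`s_λ s_λ* − s_μ s_ν* s_λ s_λ*` is a nonzero element of `ker π_S`. -/
theorem not_aperiodic_infinite_path_rep_not_injective
    {k : ℕ} {Obj Hom : Type} (Λ : KGraph k Obj Hom)
    (hRF : RowFinite Λ) (hNS : NoSources Λ)
    (v : Obj) (m n : Fin k → ℕ) (hmn : m ≠ n)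
    (hper : ∀ lam : Hom, Λ.rng lam = v → m ⊔ n ≤ Λ.d lam →
      ∀ s1 s2 : Hom, IsSegment Λ lam s1 m (m + (Λ.d lam - (m ⊔ n))) →
        IsSegment Λ lam s2 n (n + (Λ.d lam - (m ⊔ n))) → s1 = s2)
    [DecidableEq (InfPath Λ)]
    {B : Type} [NormedRing B] [StarRing B] [CStarRing B] [NormedAlgebra ℂ B]
    [StarModule ℂ B] [CompleteSpace B]
    (s : Hom → B) (hCK : IsCKFamily Λ s) (hnz : ∀ w : Obj, s (Λ.idm w) ≠ 0)
    (hgauge : ∀ z : Fin k → ℂ, (∀ i, ‖z i‖ = 1) →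
      ∃ γ : B →⋆ₐ[ℂ] B, ∀ h : Hom, γ (s h) = (∏ i, z i ^ Λ.d h i) • s h)
    (π : B →⋆ₐ[ℂ] ((lp (fun _ : InfPath Λ => ℂ) 2) →L[ℂ] (lp (fun _ : InfPath Λ => ℂ) 2)))
    (hπ1 : ∀ (lam : Hom) (x y : InfPath Λ), x.vert 0 = Λ.src lam →
      ExtendsTo Λ lam x y →
      π (s lam) (lp.single 2 x (1 : ℂ)) = lp.single 2 y (1 : ℂ))
    (hπ0 : ∀ (lam : Hom) (x : InfPath Λ), x.vert 0 ≠ Λ.src lam →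
      π (s lam) (lp.single 2 x (1 : ℂ)) = 0)
    (lam μ ν : Hom) (hr : Λ.rng lam = v) (hd : Λ.d lam = m ⊔ n)
    (hμ : IsSegment Λ lam μ 0 m) (hν : IsSegment Λ lam ν 0 n) :
    (∀ x : InfPath Λ, x.vert 0 = v → InfPath.shift Λ m x = InfPath.shift Λ n x) ∧
    s lam * star (s lam) - s μ * star (s ν) * (s lam * star (s lam)) ≠ 0 ∧
    π (s lam * star (s lam) - s μ * star (s ν) * (s lam * star (s lam))) = 0 ∧
    ¬ Function.Injective π :=
  not_aperiodic_infinite_path_rep_not_injective_general Λ v m n hmn hper s hCK hnz hgauge π hπ1 hπ0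
    lam μ ν hr hd hμ hν

end Paper
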